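/- If a runtime type environment Δ can be split as Δ = Δ₁, Δ₂ (disjoint union), and the combined environment Δ₁, Δ₂ is safe (every branching endpoint whose session queue has a matching head message from the expected sender has a label in its branch set with equal payload type, safety holds under unfolding of recursive types, and safety is preserved by every environment reduction step), then the sub-environment Δ₁ is safe on its own. -/

import Mathlib

/- Runtime type environments of the Maty multiparty session type system.
Environments map session endpoints `s[p]` to local session types and session
names `s` to queue types; the environment reduction relation is the
asynchronous LTS (send, receive, end, recursion unfolding), taken modulo queue
congruence.  Safety is the largest property satisfying the head-message
condition, closure under unfolding, and closure under reduction.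
Deadlock-freedom requires every maximal reduction sequence to end in a single
empty queue. -/

abbrev Role := ℕ
abbrev Label := ℕ
abbrev Ty := ℕ

/-- Local session types: selection ⊕, branching &, recursion μ (de Bruijn),
variables, and end.  Branches are given by a decidable label set `dom`, a
payload-type assignment `pay` and continuations `cont`. -/
inductive SessionTy : Type where
  | select (q : Role) (dom : Label → Bool) (pay : Label → Ty) (cont : Label → SessionTy)
  | branch (q : Role) (dom : Label → Bool) (pay : Label → Ty) (cont : Label → SessionTy)
  | mu (S : SessionTy)
  | var (n : ℕ)
  | endS

/-- Substitution `S[T / var k]` (used only for unfolding recursive types). -/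
def SessionTy.subst : SessionTy → ℕ → SessionTy → SessionTy
  | .select q d p c, k, T => .select q d p (fun l => (c l).subst k T)
  | .branch q d p c, k, T => .branch q d p (fun l => (c l).subst k T)
  | .mu S, k, T => .mu (S.subst (k+1) T)
  | .var n, k, T => if n = k then T else .var n
  | .endS, _, _ => .endS

/-- Unfolding of a recursive type: `unfold (μX.S) = S[μX.S/X]`. -/
def SessionTy.unfold : SessionTy → SessionTy
  | .mu S => S.subst 0 (.mu S)
  | S => S

structure QEntry where
  sender : Role
  receiver : Role
  label : Label
  payload : Ty
deriving DecidableEq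

abbrev Queue := List QEntry

/-- Swap of adjacent queue entries with distinct (sender, receiver) pairs. -/
inductive QSwap : Queue → Queue → Prop
  | swap (Q₁ Q₂ : Queue) (e₁ e₂ : QEntry)
      (h : e₁.sender ≠ e₂.sender ∨ e₁.receiver ≠ e₂.receiver) :
      QSwap (Q₁ ++ e₁ :: e₂ :: Q₂) (Q₁ ++ e₂ :: e₁ :: Q₂)

/-- Queue congruence. -/
def QCong : Queue → Queue → Prop := Relation.EqvGen QSwap

abbrev SName := ℕ

/-- Environment entries: session endpoints `s[p] : S` and queues `s : Q`. -/
inductive EnvEntry : Type where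
  | ep (s : SName) (p : Role) (S : SessionTy)
  | qu (s : SName) (Q : Queue)

/-- Runtime type environments (unordered collections of entries). -/
abbrev Env := Multiset EnvEntry

/-- Congruence on entries: queue types may be permuted by queue congruence. -/
inductive EntryCong : EnvEntry → EnvEntry → Prop
  | ep {s p S} : EntryCong (.ep s p S) (.ep s p S)
  | qu {s Q Q'} : QCong Q Q' → EntryCong (.qu s Q) (.qu s Q')

/-- Congruence on environments: pointwise congruence of entries. -/
def EnvCong : Env → Env → Prop := Multiset.Rel EntryCong

/-- One labelled step of the LTS on runtime type environments. -/
inductive EStep : Env → Env → Prop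
  | send (Δ : Env) (s : SName) (p q : Role) (ℓ : Label)
      (d : Label → Bool) (pay : Label → Ty) (cont : Label → SessionTy) (Q : Queue)
      (h : d ℓ = true) :
      EStep (EnvEntry.ep s p (.select q d pay cont) ::ₘ EnvEntry.qu s Q ::ₘ Δ)
            (EnvEntry.ep s p (cont ℓ) ::ₘ EnvEntry.qu s (Q ++ [⟨p, q, ℓ, pay ℓ⟩]) ::ₘ Δ)
  | recv (Δ : Env) (s : SName) (p q : Role) (ℓ : Label)
      (d : Label → Bool) (pay : Label → Ty) (cont : Label → SessionTy) (Q : Queue)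
      (h : d ℓ = true) :
      EStep (EnvEntry.ep s p (.branch q d pay cont) ::ₘ
               EnvEntry.qu s (⟨q, p, ℓ, pay ℓ⟩ :: Q) ::ₘ Δ)
            (EnvEntry.ep s p (cont ℓ) ::ₘ EnvEntry.qu s Q ::ₘ Δ)
  | done (Δ : Env) (s : SName) (p : Role) :
      EStep (EnvEntry.ep s p .endS ::ₘ Δ) Δ
  | unfold (Δ Δ' : Env) (s : SName) (p : Role) (S : SessionTy)
      (h : EStep (EnvEntry.ep s p (SessionTy.mu S).unfold ::ₘ Δ) Δ') :
      EStep (EnvEntry.ep s p (.mu S) ::ₘ Δ) Δ'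

/-- Environment reduction `Δ ⟹ Δ'`: a labelled step taken modulo congruence. -/
def ERed (Δ Δ' : Env) : Prop :=
  ∃ Δ₁ Δ₂, EnvCong Δ Δ₁ ∧ EStep Δ₁ Δ₂ ∧ EnvCong Δ₂ Δ'

/-- Head-message condition: any receivable head message at a branching endpoint
matches a declared branch with equal payload type. -/
def HeadSafe (Δ : Env) : Prop :=
  ∀ (s : SName) (p q : Role) (d : Label → Bool) (pay : Label → Ty)
      (cont : Label → SessionTy) (Q : Queue),
    EnvEntry.ep s p (.branch q d pay cont) ∈ Δ →
    EnvEntry.qu s Q ∈ Δ →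
    ∀ (ℓ : Label) (B : Ty) (Q' : Queue), QCong Q (⟨q, p, ℓ, B⟩ :: Q') →
      d ℓ = true ∧ B = pay ℓ

/-- A safety property: satisfies the head-message condition, is closed under
unfolding of recursive endpoint types, and is preserved by reduction. -/
def IsSafetyProp (φ : Env → Prop) : Prop :=
  ∀ Δ, φ Δ →
    HeadSafe Δ ∧
    (∀ (Δ' : Env) (s : SName) (p : Role) (S : SessionTy),
        Δ = EnvEntry.ep s p (.mu S) ::ₘ Δ' →
        φ (EnvEntry.ep s p (SessionTy.mu S).unfold ::ₘ Δ')) ∧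
    (∀ Δ', ERed Δ Δ' → φ Δ')

/-- Safety: the largest safety property. -/
def EnvSafe (Δ : Env) : Prop := ∃ φ, IsSafetyProp φ ∧ φ Δ

/-- Deadlock-freedom: every maximal reduction sequence ends in a single empty
queue `s : ε`. -/
def DeadlockFree (Δ : Env) : Prop :=
  ∀ Δ', Relation.ReflTransGen ERed Δ Δ' → (∀ Δ'', ¬ ERed Δ' Δ'') →
    ∃ s, Δ' = {EnvEntry.qu s []}

/-- The session name of an entry. -/
def EnvEntry.sname : EnvEntry → SName
  | .ep s _ _ => s
  | .qu s _ => s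

/-- The set of session names occurring in an environment. -/
def snames (Δ : Env) : Set SName := { s | ∃ e ∈ Δ, EnvEntry.sname e = s }

/-- Compliance: safety together with deadlock-freedom. -/
def Compliant (Δ : Env) : Prop := EnvSafe Δ ∧ DeadlockFree Δ

/- Safety is inherited by sub-environments because "`Δ` is part of some safe environment" is
itself a safety property: the head-message condition only inspects entries of `Δ`, and every
unfolding or reduction of `Δ` is also one of `Δ + Γ`, with the frame `Γ` carried along. -/

lemma entryCong_refl (e : EnvEntry) : EntryCong e e := by
  cases e with
  | ep => exact .ep
  | qu => exact .qu (Relation.EqvGen.refl _)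

lemma envCong_refl (Δ : Env) : EnvCong Δ Δ :=
  Multiset.rel_refl_of_refl_on fun e _ => entryCong_refl e

lemma EnvCong.add_right {Δ Δ' : Env} (h : EnvCong Δ Δ') (Γ : Env) :
    EnvCong (Δ + Γ) (Δ' + Γ) :=
  h.add (envCong_refl Γ)

lemma EStep.add_right {Δ Δ' : Env} (h : EStep Δ Δ') (Γ : Env) : EStep (Δ + Γ) (Δ' + Γ) := by
  induction h with
  | send Δ s p q ℓ d pay cont Q hd =>
      simpa only [Multiset.cons_add] using EStep.send (Δ + Γ) s p q ℓ d pay cont Q hd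
  | recv Δ s p q ℓ d pay cont Q hd =>
      simpa only [Multiset.cons_add] using EStep.recv (Δ + Γ) s p q ℓ d pay cont Q hd
  | done Δ s p =>
      simpa only [Multiset.cons_add] using EStep.done (Δ + Γ) s p
  | unfold Δ Δ' s p S _ ih =>
      rw [Multiset.cons_add] at ih ⊢
      exact EStep.unfold (Δ + Γ) (Δ' + Γ) s p S ih

lemma ERed.add_right {Δ Δ' : Env} (h : ERed Δ Δ') (Γ : Env) : ERed (Δ + Γ) (Δ' + Γ) := by
  obtain ⟨Δa, Δb, hcong, hstep, hcong'⟩ := h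
  exact ⟨Δa + Γ, Δb + Γ, hcong.add_right Γ, hstep.add_right Γ, hcong'.add_right Γ⟩

lemma HeadSafe.of_le {Δ Δ' : Env} (h : HeadSafe Δ') (hle : Δ ≤ Δ') : HeadSafe Δ :=
  fun s p q d pay cont Q hep hqu =>
    h s p q d pay cont Q (Multiset.mem_of_le hle hep) (Multiset.mem_of_le hle hqu)

lemma isSafetyProp_envSafe : IsSafetyProp EnvSafe := by
  rintro Δ ⟨φ, hφ, hΔ⟩
  obtain ⟨hhead, hunfold, hred⟩ := hφ Δ hΔ
  exact ⟨hhead, fun Δ' s p S he => ⟨φ, hφ, hunfold Δ' s p S he⟩,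
    fun Δ' hr => ⟨φ, hφ, hred Δ' hr⟩⟩

lemma isSafetyProp_exists_envSafe_add : IsSafetyProp fun Δ => ∃ Γ, EnvSafe (Δ + Γ) := by
  rintro Δ ⟨Γ, hΓ⟩
  obtain ⟨hhead, hunfold, hred⟩ := isSafetyProp_envSafe _ hΓ
  refine ⟨hhead.of_le (Multiset.le_add_right Δ Γ), ?_, fun Δ' hr => ⟨Γ, hred _ (hr.add_right Γ)⟩⟩
  rintro Δ' s p S rfl
  refine ⟨Γ, ?_⟩
  simpa only [Multiset.cons_add] using hunfold (Δ' + Γ) s p S (Multiset.cons_add _ _ _)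

/-- if the disjoint union `Δ₁ + Δ₂` is safe, then the
sub-environment `Δ₁` is safe on its own. -/
theorem safe_of_safe_add (Δ₁ Δ₂ : Env) (h : EnvSafe (Δ₁ + Δ₂)) : EnvSafe Δ₁ :=
  ⟨_, isSafetyProp_exists_envSafe_add, Δ₂, h⟩
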